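/- Narrowing for explicit subtyping: for all type environments Γ, Δ, a variable X, and types P, Q, M, N, if sub((Γ, ⟨X,Q⟩, Δ), M, N) and sub(Γ, P, Q) are derivable, then sub((Γ, ⟨X,P⟩, Δ), M, N) is derivable. -/

import Mathlib

/-- Types of pure System F<:, with named type variables drawn from ℕ.
`all X S T` is `∀X<:S.T`, binding `X` in `T` but not in `S`. -/
inductive Tp : Type
  | var : ℕ → Tp
  | top : Tp
  | arr : Tp → Tp → Tp
  | all : ℕ → Tp → Tp → Tp
  deriving DecidableEq

/-- Free type variables of a type. -/
def Tp.fv : Tp → Finset ℕ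
  | .var x => {x}
  | .top => ∅
  | .arr s t => s.fv ∪ t.fv
  | .all x s t => s.fv ∪ (t.fv.erase x)

/-- Capture-avoiding simultaneous renaming of the free variables of a type
along `σ`; bound variables are renamed where necessary to avoid capture. -/
def Tp.ren (σ : ℕ → ℕ) : Tp → Tp
  | .var x => .var (σ x)
  | .top => .top
  | .arr s t => .arr (s.ren σ) (t.ren σ)
  | .all x s t =>
      let bad : Finset ℕ := (t.fv.erase x).image σ
      let x' : ℕ := if x ∈ bad then bad.sup id + 1 else x
      .all x' (s.ren σ) (t.ren (Function.update σ x x'))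

/-- Capture-avoiding renaming of every free occurrence of `y` by `z`. -/
def Tp.renVar (y z : ℕ) (t : Tp) : Tp := t.ren (Function.update id y z)

/-- Type environments: finite lists of pairs ⟨variable, type⟩
(the head of the list is the most recently introduced binding). -/
abbrev TpEnv := List (ℕ × Tp)

/-- The domain of an environment: the set of its variables. -/
def envDom (Γ : TpEnv) : Finset ℕ := (Γ.map Prod.fst).toFinset

/-- `Closed T Γ`: every free variable of `T` is bound to some type in `Γ`. -/
def Closed (T : Tp) (Γ : TpEnv) : Prop := ∀ Y ∈ T.fv, ∃ U, (Y, U) ∈ Γ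

/-- Well-formedness of type environments. -/
inductive OkEnv : TpEnv → Prop
  | nil : OkEnv []
  | cons {Γ : TpEnv} {X : ℕ} {T : Tp} :
      OkEnv Γ → X ∉ envDom Γ → Closed T Γ → OkEnv ((X, T) :: Γ)

/-- The original algorithmic subtyping judgment `Γ ⊢ S <: T`. -/
inductive ASub : TpEnv → Tp → Tp → Prop
  | top (Γ : TpEnv) (S : Tp) : ASub Γ S .top
  | refl (Γ : TpEnv) (X : ℕ) : ASub Γ (.var X) (.var X)
  | trans {Γ : TpEnv} {X : ℕ} {U T : Tp} :
      (X, U) ∈ Γ → ASub Γ U T → ASub Γ (.var X) T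
  | arr {Γ : TpEnv} {S1 S2 T1 T2 : Tp} :
      ASub Γ T1 S1 → ASub Γ S2 T2 → ASub Γ (.arr S1 S2) (.arr T1 T2)
  | all {Γ : TpEnv} {X : ℕ} {S1 S2 T1 T2 : Tp} :
      ASub Γ T1 S1 → ASub ((X, T1) :: Γ) S2 T2 →
      ASub Γ (.all X S1 S2) (.all X T1 T2)

/-- The explicit (sequent-style) subtyping relation `sub(Γ, S, T)`. -/
inductive ESub : TpEnv → Tp → Tp → Prop
  | top {Γ : TpEnv} {S : Tp} : OkEnv Γ → Closed S Γ → ESub Γ S .top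
  | var {Γ : TpEnv} {X : ℕ} {U : Tp} :
      OkEnv Γ → (X, U) ∈ Γ → ESub Γ (.var X) (.var X)
  | trs {Γ : TpEnv} {X : ℕ} {U T : Tp} :
      (X, U) ∈ Γ → ESub Γ U T → ESub Γ (.var X) T
  | arr {Γ : TpEnv} {S1 S2 T1 T2 : Tp} :
      ESub Γ T1 S1 → ESub Γ S2 T2 → ESub Γ (.arr S1 S2) (.arr T1 T2)
  | all {Γ : TpEnv} {X : ℕ} {S1 S2 T1 T2 : Tp} :
      ESub Γ T1 S1 →
      (∀ Y : ℕ, OkEnv ((Y, T1) :: Γ) →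
        ESub ((Y, T1) :: Γ) (Tp.renVar X Y S2) (Tp.renVar X Y T2)) →
      ESub Γ (.all X S1 S2) (.all X T1 T2)


/-! ### Auxiliary lemmas -/

def Tp.size : Tp → ℕ
  | .var _ => 1
  | .top => 1
  | .arr s t => s.size + t.size + 1
  | .all _ s t => s.size + t.size + 1

lemma Tp.size_ren (σ : ℕ → ℕ) (t : Tp) : (t.ren σ).size = t.size := by
  induction t generalizing σ with
  | var x => rfl
  | top => rfl
  | arr s t ihs iht => simp [Tp.ren, Tp.size, ihs, iht]
  | all x s t ihs iht => simp [Tp.ren, Tp.size, ihs, iht]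

lemma Tp.size_renVar (y z : ℕ) (t : Tp) : (Tp.renVar y z t).size = t.size :=
  Tp.size_ren _ t

lemma fresh_not_mem (s : Finset ℕ) : s.sup id + 1 ∉ s := by
  intro h
  have h2 := Finset.le_sup (f := id) h
  simp only [id] at h2
  omega

lemma Tp.fv_ren (σ : ℕ → ℕ) (t : Tp) : (t.ren σ).fv = t.fv.image σ := by
  induction t generalizing σ with
  | var x => simp [Tp.ren, Tp.fv]
  | top => simp [Tp.ren, Tp.fv]
  | arr s t ihs iht => simp [Tp.ren, Tp.fv, Finset.image_union, ihs, iht]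
  | all x s t ihs iht =>
    simp only [Tp.ren, Tp.fv, Finset.image_union]
    set bad := (t.fv.erase x).image σ with hbad
    set x' := if x ∈ bad then bad.sup id + 1 else x with hx'
    have hx'bad : x' ∉ bad := by
      rw [hx']
      split
      · exact fresh_not_mem bad
      · assumption
    rw [ihs, iht]
    congr 1
    ext z
    simp only [Finset.mem_erase, Finset.mem_image, hbad] at *
    constructor
    · rintro ⟨hzx', w, hw, hww⟩
      by_cases hwx : w = x
      · subst hwx
        simp [Function.update] at hww
        exact absurd hww.symm hzx'
      · refine ⟨w, ⟨hwx, hw⟩, ?_⟩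
        rwa [Function.update_of_ne hwx] at hww
    · rintro ⟨w, ⟨hwx, hw⟩, hww⟩
      have hzbad : ∃ a, (a ≠ x ∧ a ∈ t.fv) ∧ σ a = z := ⟨w, ⟨hwx, hw⟩, hww⟩
      refine ⟨fun h => hx'bad (h ▸ hzbad), w, hw, ?_⟩
      rwa [Function.update_of_ne hwx]

lemma fv_renVar (y z : ℕ) (t : Tp) :
    (Tp.renVar y z t).fv = t.fv.image (Function.update id y z) :=
  Tp.fv_ren _ t

lemma mem_envDom {Y : ℕ} {Γ : TpEnv} : Y ∈ envDom Γ ↔ ∃ U, (Y, U) ∈ Γ := by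
  simp only [envDom, List.mem_toFinset, List.mem_map]
  constructor
  · rintro ⟨⟨a, b⟩, hm, rfl⟩; exact ⟨b, hm⟩
  · rintro ⟨U, hm⟩; exact ⟨(Y, U), hm, rfl⟩

lemma closed_iff {T : Tp} {Γ : TpEnv} : Closed T Γ ↔ T.fv ⊆ envDom Γ := by
  constructor
  · intro h Y hY; exact mem_envDom.2 (h Y hY)
  · intro h Y hY; exact mem_envDom.1 (h hY)

lemma closed_mono {T : Tp} {Γ Γ' : TpEnv} (h : envDom Γ ⊆ envDom Γ') :
    Closed T Γ → Closed T Γ' := fun hc => closed_iff.2 ((closed_iff.1 hc).trans h)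

lemma envDom_append (Δ Γ : TpEnv) : envDom (Δ ++ Γ) = envDom Δ ∪ envDom Γ := by
  simp [envDom]

lemma envDom_replace (Δ Γ : TpEnv) (X : ℕ) (P Q : Tp) :
    envDom (Δ ++ (X, P) :: Γ) = envDom (Δ ++ (X, Q) :: Γ) := by
  simp [envDom]

lemma ok_replace {Γ : TpEnv} {X : ℕ} {P Q : Tp} (hP : Closed P Γ) :
    ∀ Δ, OkEnv (Δ ++ (X, Q) :: Γ) → OkEnv (Δ ++ (X, P) :: Γ) := by
  intro Δ
  induction Δ with
  | nil =>
    intro h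
    cases h with
    | cons h1 h2 h3 => exact OkEnv.cons h1 h2 hP
  | cons d Δ ih =>
    intro h
    cases h with
    | cons h1 h2 h3 =>
      simp only [List.append_eq] at h1 h2 h3
      refine OkEnv.cons (ih h1) ?_ ?_
      · simp only [List.append_eq]
        rwa [show envDom (Δ ++ (X, P) :: Γ) = envDom (Δ ++ (X, Q) :: Γ) from
          envDom_replace ..]
      · simp only [List.append_eq]
        exact closed_mono (by rw [envDom_replace Δ Γ X P Q]) h3

lemma esub_reg {Γ : TpEnv} {S T : Tp} (h : ESub Γ S T) :
    OkEnv Γ ∧ Closed S Γ ∧ Closed T Γ := by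
  induction h with
  | top hok hcl => exact ⟨hok, hcl, fun Y hY => by simp [Tp.fv] at hY⟩
  | var hok hm =>
    refine ⟨hok, ?_, ?_⟩ <;>
      { intro Y hY; simp [Tp.fv] at hY; subst hY; exact ⟨_, hm⟩ }
  | trs hm hsub ih =>
    refine ⟨ih.1, ?_, ih.2.2⟩
    intro Y hY; simp [Tp.fv] at hY; subst hY; exact ⟨_, hm⟩
  | arr h1 h2 ih1 ih2 =>
    refine ⟨ih1.1, ?_, ?_⟩ <;>
      { intro Y hY
        simp only [Tp.fv, Finset.mem_union] at hY
        rcases hY with hY | hY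
        · first | exact ih1.2.2 Y hY | exact ih1.2.1 Y hY
        · first | exact ih2.2.1 Y hY | exact ih2.2.2 Y hY }
  | @all Γ X S1 S2 T1 T2 h1 h2 ih1 ih2 =>
    obtain ⟨hok, hT1, hS1⟩ := ih1
    set Y : ℕ := (envDom Γ ∪ S2.fv ∪ T2.fv).sup id + 1 with hY
    have hYfresh : Y ∉ envDom Γ ∪ S2.fv ∪ T2.fv := fresh_not_mem _
    simp only [Finset.mem_union, not_or] at hYfresh
    have hokY : OkEnv ((Y, T1) :: Γ) := OkEnv.cons hok hYfresh.1.1 hT1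
    obtain ⟨_, hrS2, hrT2⟩ := ih2 Y hokY
    have key : ∀ (W : Tp), Y ∉ W.fv → Closed (Tp.renVar X Y W) ((Y, T1) :: Γ) →
        ∀ Z ∈ W.fv.erase X, ∃ U, (Z, U) ∈ Γ := by
      intro W hYW hcl Z hZ
      simp only [Finset.mem_erase] at hZ
      have hZmem : Z ∈ (Tp.renVar X Y W).fv := by
        rw [fv_renVar]
        exact Finset.mem_image.2 ⟨Z, hZ.2, by rw [Function.update_of_ne hZ.1]; rfl⟩
      obtain ⟨U, hU⟩ := hcl Z hZmem
      rcases List.mem_cons.1 hU with hU | hU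
      · exfalso
        have hZY : Z = Y := congrArg Prod.fst hU
        exact hYW (hZY ▸ hZ.2)
      · exact ⟨U, hU⟩
    refine ⟨hok, ?_, ?_⟩
    · intro Z hZ
      simp only [Tp.fv, Finset.mem_union] at hZ
      rcases hZ with hZ | hZ
      · exact hS1 Z hZ
      · exact key S2 hYfresh.1.2 hrS2 Z hZ
    · intro Z hZ
      simp only [Tp.fv, Finset.mem_union] at hZ
      rcases hZ with hZ | hZ
      · exact hT1 Z hZ
      · exact key T2 hYfresh.2 hrT2 Z hZ

lemma esub_weaken {E : TpEnv} {M N : Tp} (h : ESub E M N) :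
    ∀ Δ Θ Γ, E = Δ ++ Γ → OkEnv (Δ ++ Θ ++ Γ) → ESub (Δ ++ Θ ++ Γ) M N := by
  induction h with
  | top hok hcl =>
    rintro Δ Θ Γ rfl hok'
    refine ESub.top hok' (closed_mono ?_ hcl)
    simp only [envDom_append]
    intro z hz; simp only [Finset.mem_union] at *; tauto
  | @var _ X0 U0 hok hm =>
    rintro Δ Θ Γ rfl hok'
    refine ESub.var hok' (U := U0) ?_
    simp only [List.mem_append] at hm ⊢; tauto
  | @trs _ X0 U0 T0 hm hsub ih =>
    rintro Δ Θ Γ rfl hok'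
    refine ESub.trs (U := U0) ?_ (ih Δ Θ Γ rfl hok')
    simp only [List.mem_append] at hm ⊢; tauto
  | arr h1 h2 ih1 ih2 =>
    rintro Δ Θ Γ rfl hok'
    exact ESub.arr (ih1 Δ Θ Γ rfl hok') (ih2 Δ Θ Γ rfl hok')
  | @all E X S1 S2 T1 T2 h1 h2 ih1 ih2 =>
    rintro Δ Θ Γ rfl hok'
    refine ESub.all (ih1 Δ Θ Γ rfl hok') ?_
    intro Y hokY
    obtain ⟨hok0, hT1, _⟩ := esub_reg h1
    have hYnot : Y ∉ envDom (Δ ++ Γ) := by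
      cases hokY with
      | cons _ hnd _ =>
        intro hc; apply hnd
        rw [envDom_append] at hc ⊢
        rw [envDom_append]
        simp only [Finset.mem_union] at *; tauto
    have hokY0 : OkEnv ((Y, T1) :: (Δ ++ Γ)) := OkEnv.cons hok0 hYnot hT1
    exact ih2 Y hokY0 ((Y, T1) :: Δ) Θ Γ rfl hokY

lemma esub_main : ∀ n : ℕ,
    (∀ Γ S Qm, ESub Γ S Qm → Qm.size ≤ n → ∀ T, ESub Γ Qm T → ESub Γ S T) ∧
    (∀ E M N, ESub E M N → ∀ Δ X Qm P Γ, E = Δ ++ (X, Qm) :: Γ →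
      Qm.size ≤ n → ESub Γ P Qm → ESub (Δ ++ (X, P) :: Γ) M N) := by
  intro n
  induction n using Nat.strong_induction_on with
  | _ n IH =>
  have htrans : ∀ Γ S Qm, ESub Γ S Qm → Qm.size ≤ n → ∀ T,
      ESub Γ Qm T → ESub Γ S T := by
    intro Γ S Qm d1
    induction d1 with
    | top hok hcl =>
      intro _ T d2
      cases d2 with
      | top hok' hcl' => exact ESub.top hok hcl
    | var hok hm => intro _ T d2; exact d2
    | trs hm hsub ih =>
      intro hsz T d2
      exact ESub.trs hm (ih hsz T d2)
    | @arr Γ S1 S2 Q1 Q2 d1a d1b iha ihb =>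
      intro hsz T d2
      cases d2 with
      | top hok' hcl' =>
        refine ESub.top (esub_reg d1a).1 ?_
        intro Z hZ
        simp only [Tp.fv, Finset.mem_union] at hZ
        rcases hZ with hZ | hZ
        · exact (esub_reg d1a).2.2 Z hZ
        · exact (esub_reg d1b).2.1 Z hZ
      | @arr _ _ _ T1 T2 d2a d2b =>
        have hlt1 : Q1.size < n := by simp [Tp.size] at hsz; omega
        have hlt2 : Q2.size < n := by simp [Tp.size] at hsz; omega
        exact ESub.arr ((IH Q1.size hlt1).1 Γ T1 Q1 d2a le_rfl S1 d1a)
          ((IH Q2.size hlt2).1 Γ S2 Q2 d1b le_rfl T2 d2b)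
    | @all Γ X S1 S2 Q1 Q2 d1a prem1 iha ihprem =>
      intro hsz T d2
      cases d2 with
      | top hok' hcl' =>
        exact ESub.top (esub_reg (ESub.all d1a prem1)).1
          (esub_reg (ESub.all d1a prem1)).2.1
      | @all _ _ _ _ T1 T2 d2a prem2 =>
        have hlt1 : Q1.size < n := by simp [Tp.size] at hsz; omega
        have hlt2 : Q2.size < n := by simp [Tp.size] at hsz; omega
        refine ESub.all ((IH Q1.size hlt1).1 Γ T1 Q1 d2a le_rfl S1 d1a) ?_
        intro Y hokY
        have hYnot : Y ∉ envDom Γ := by cases hokY with | cons _ hnd _ => exact hnd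
        have hokYQ : OkEnv ((Y, Q1) :: Γ) :=
          OkEnv.cons (esub_reg d1a).1 hYnot (esub_reg d1a).2.1
        have a : ESub ((Y, Q1) :: Γ) (Tp.renVar X Y S2) (Tp.renVar X Y Q2) :=
          prem1 Y hokYQ
        have a' : ESub ((Y, T1) :: Γ) (Tp.renVar X Y S2) (Tp.renVar X Y Q2) :=
          (IH Q1.size hlt1).2 _ _ _ a [] Y Q1 T1 Γ rfl le_rfl d2a
        have b := prem2 Y hokY
        have hszr : (Tp.renVar X Y Q2).size ≤ Q2.size := by
          rw [Tp.size_renVar]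
        exact (IH Q2.size hlt2).1 _ _ _ a' hszr _ b
  have hnarrow : ∀ E M N, ESub E M N → ∀ Δ X Qm P Γ, E = Δ ++ (X, Qm) :: Γ →
      Qm.size ≤ n → ESub Γ P Qm → ESub (Δ ++ (X, P) :: Γ) M N := by
    intro E M N d
    induction d with
    | top hok hcl =>
      rintro Δ X Qm P Γ rfl hsz hPQ
      refine ESub.top (ok_replace (esub_reg hPQ).2.1 Δ hok) ?_
      exact closed_mono (by rw [envDom_replace Δ Γ X P Qm]) hcl
    | @var _ X0 U hok hm =>
      rintro Δ X Qm P Γ rfl hsz hPQ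
      have hok' := ok_replace (esub_reg hPQ).2.1 Δ hok
      rcases List.mem_append.1 hm with hm | hm
      · exact ESub.var hok' (List.mem_append.2 (Or.inl hm))
      · rcases List.mem_cons.1 hm with hm | hm
        · have hXX : X0 = X := congrArg Prod.fst hm
          rw [hXX]
          exact ESub.var hok' (List.mem_append.2 (Or.inr (List.mem_cons_self)))
        · exact ESub.var hok' (List.mem_append.2 (Or.inr (List.mem_cons_of_mem _ hm)))
    | @trs _ X0 U T hm hsub ih =>
      rintro Δ X Qm P Γ rfl hsz hPQ
      have hok' := ok_replace (esub_reg hPQ).2.1 Δ (esub_reg hsub).1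
      have ih' := ih Δ X Qm P Γ rfl hsz hPQ
      rcases List.mem_append.1 hm with hm | hm
      · exact ESub.trs (List.mem_append.2 (Or.inl hm)) ih'
      · rcases List.mem_cons.1 hm with hm | hm
        · have hXX : X0 = X := congrArg Prod.fst hm
          have hUQ : U = Qm := congrArg Prod.snd hm
          have hPQ' : ESub (Δ ++ (X, P) :: Γ) P Qm := by
            have hw := esub_weaken hPQ [] (Δ ++ [(X, P)]) Γ rfl
            simpa using hw (by simpa using hok')
          have hmem : (X0, P) ∈ Δ ++ (X, P) :: Γ := by
            rw [hXX]
            exact List.mem_append.2 (Or.inr (List.mem_cons_self))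
          exact ESub.trs hmem (htrans _ P Qm hPQ' hsz T (hUQ ▸ ih'))
        · exact ESub.trs (List.mem_append.2 (Or.inr (List.mem_cons_of_mem _ hm))) ih'
    | arr h1 h2 ih1 ih2 =>
      rintro Δ X Qm P Γ rfl hsz hPQ
      exact ESub.arr (ih1 Δ X Qm P Γ rfl hsz hPQ) (ih2 Δ X Qm P Γ rfl hsz hPQ)
    | @all E X0 S1 S2 T1 T2 h1 h2 ih1 ih2 =>
      rintro Δ X Qm P Γ rfl hsz hPQ
      refine ESub.all (ih1 Δ X Qm P Γ rfl hsz hPQ) ?_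
      intro Y hokY
      have hYnot : Y ∉ envDom (Δ ++ (X, Qm) :: Γ) := by
        cases hokY with
        | cons _ hnd _ => rwa [envDom_replace Δ Γ X P Qm] at hnd
      have hT1cl : Closed T1 (Δ ++ (X, Qm) :: Γ) := (esub_reg h1).2.1
      have hokY0 : OkEnv ((Y, T1) :: (Δ ++ (X, Qm) :: Γ)) :=
        OkEnv.cons (esub_reg h1).1 hYnot hT1cl
      exact ih2 Y hokY0 ((Y, T1) :: Δ) X Qm P Γ rfl hsz hPQ
  exact ⟨htrans, hnarrow⟩

theorem esub_narrowing (Γ Δ : TpEnv) (X : ℕ) (P Q M N : Tp)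
    (h1 : ESub (Δ ++ (X, Q) :: Γ) M N) (h2 : ESub Γ P Q) :
    ESub (Δ ++ (X, P) :: Γ) M N :=
  (esub_main Q.size).2 _ M N h1 Δ X Q P Γ rfl le_rfl h2
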